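/- arXiv:1010.5405 — 2 statements merged into one kernel-verified Lean document; each statement's English description precedes it below -/
import Mathlib

section
/- Let μ(θ,κ) = M(θ)N(κ) be the equilibrium and L* the formal adjoint of L given by L*φ = −κ ∂_θ φ + λ sin θ ∂_κ φ + λ ∂_κ(κ φ) + α² ∂²_κ φ. Then L*(μ) = 0. -/
open Real

/-- Partial derivative in the first variable. -/
noncomputable def pTheta (f : ℝ → ℝ → ℝ) (θ κ : ℝ) : ℝ := deriv (fun t => f t κ) θ
/-- Partial derivative in the second variable. -/
noncomputable def pKappa (f : ℝ → ℝ → ℝ) (θ κ : ℝ) : ℝ := deriv (fun k => f θ k) κ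

/-- The formal adjoint L* φ = −κ ∂_θ φ + λ sin θ ∂_κ φ + λ ∂_κ(κ φ) + α² ∂²_κ φ. -/
noncomputable def Lstar (lam alpha : ℝ) (φ : ℝ → ℝ → ℝ) (θ κ : ℝ) : ℝ :=
  -κ * pTheta φ θ κ + lam * Real.sin θ * pKappa φ θ κ +
    lam * deriv (fun k => k * φ θ k) κ + alpha ^ 2 * deriv (deriv (fun k => φ θ k)) κ

/-! Write `M θ = A exp (a cos θ)` and `N κ = S exp (-b κ²)` with `a = λ²/α²`, `b = λ/(2α²)`.
For such a product `μ = M N` one computes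
`L*μ = μ · ((a - 2bλ) κ sin θ + (λ - 2bα²)(1 - 2bκ²))`,
and both coefficients vanish for these values of `a` and `b`: the transport terms cancel against
the force term, and the friction against the diffusion. -/

theorem Lstar_mul_apply (lam alpha : ℝ) {f g : ℝ → ℝ} {θ κ : ℝ} (hg : DifferentiableAt ℝ g κ) :
    Lstar lam alpha (fun θ κ => f θ * g κ) θ κ =
      -κ * deriv f θ * g κ + lam * sin θ * f θ * deriv g κ +
        lam * f θ * (g κ + κ * deriv g κ) + alpha ^ 2 * f θ * deriv (deriv g) κ := by
  have hprod : deriv (fun k => k * (f θ * g k)) κ = f θ * (g κ + κ * deriv g κ) := by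
    refine (((hasDerivAt_id' κ).fun_mul (hg.hasDerivAt.const_mul (f θ))).congr_deriv ?_).deriv
    ring
  simp only [Lstar, pTheta, pKappa, deriv_mul_const_field', deriv_const_mul_field', hprod]
  ring

theorem hasDerivAt_const_mul_exp_mul_cos (A a θ : ℝ) :
    HasDerivAt (fun t => A * exp (a * cos t)) (-(a * sin θ) * (A * exp (a * cos θ))) θ := by
  refine ((((hasDerivAt_cos θ).const_mul a).exp).const_mul A).congr_deriv ?_
  ring

theorem hasDerivAt_const_mul_gaussian (S b κ : ℝ) :
    HasDerivAt (fun k => S * exp (-b * k ^ 2)) (-2 * b * κ * (S * exp (-b * κ ^ 2))) κ := by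
  refine (((hasDerivAt_pow 2 κ).const_mul (-b)).exp.const_mul S).congr_deriv ?_
  push_cast
  ring

theorem deriv_deriv_const_mul_gaussian (S b κ : ℝ) :
    deriv (deriv fun k => S * exp (-b * k ^ 2)) κ =
      (4 * b ^ 2 * κ ^ 2 - 2 * b) * (S * exp (-b * κ ^ 2)) := by
  have hderiv : deriv (fun k => S * exp (-b * k ^ 2)) =
      fun k => -2 * b * k * (S * exp (-b * k ^ 2)) :=
    funext fun k => (hasDerivAt_const_mul_gaussian S b k).deriv
  rw [hderiv]
  refine ((((hasDerivAt_id' κ).const_mul (-2 * b)).fun_mul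
    (hasDerivAt_const_mul_gaussian S b κ)).congr_deriv ?_).deriv
  ring

theorem Lstar_mu_eq_zero_general (lam alpha : ℝ) (halpha : 0 < alpha)
    (M : ℝ → ℝ)
    (hM : ∀ θ, M θ = (2 * π * ((1 / π) *
        ∫ t in (0:ℝ)..π, Real.exp ((lam ^ 2 / alpha ^ 2) * Real.cos t)))⁻¹ *
        Real.exp ((lam ^ 2 / alpha ^ 2) * Real.cos θ))
    (N : ℝ → ℝ)
    (hN : ∀ κ, N κ = Real.sqrt (lam / (2 * π * alpha ^ 2)) *
        Real.exp (-(lam * κ ^ 2) / (2 * alpha ^ 2)))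
    (mu : ℝ → ℝ → ℝ) (hmu : ∀ θ κ, mu θ κ = M θ * N κ) :
    ∀ θ κ, Lstar lam alpha mu θ κ = 0 := by
  intro θ κ
  have hM' : M = fun t => _ * exp (lam ^ 2 / alpha ^ 2 * cos t) := funext hM
  have hN' : N = fun k =>
      √(lam / (2 * π * alpha ^ 2)) * exp (-(lam / (2 * alpha ^ 2)) * k ^ 2) := by
    funext k
    rw [hN]
    ring_nf
  obtain rfl : mu = fun θ κ => M θ * N κ := funext₂ hmu
  rw [Lstar_mul_apply lam alpha
      (hN' ▸ (hasDerivAt_const_mul_gaussian _ _ κ).differentiableAt),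
    hM', hN', (hasDerivAt_const_mul_exp_mul_cos _ _ θ).deriv,
    (hasDerivAt_const_mul_gaussian _ _ κ).deriv, deriv_deriv_const_mul_gaussian]
  have hα : alpha ≠ 0 := halpha.ne'
  field_simp
  ring

theorem Lstar_mu_eq_zero (lam alpha : ℝ) (hlam : 0 < lam) (halpha : 0 < alpha)
    (M : ℝ → ℝ)
    (hM : ∀ θ, M θ = (2 * π * ((1 / π) *
        ∫ t in (0:ℝ)..π, Real.exp ((lam ^ 2 / alpha ^ 2) * Real.cos t)))⁻¹ *
        Real.exp ((lam ^ 2 / alpha ^ 2) * Real.cos θ))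
    (N : ℝ → ℝ)
    (hN : ∀ κ, N κ = Real.sqrt (lam / (2 * π * alpha ^ 2)) *
        Real.exp (-(lam * κ ^ 2) / (2 * alpha ^ 2)))
    (mu : ℝ → ℝ → ℝ) (hmu : ∀ θ κ, mu θ κ = M θ * N κ) :
    ∀ θ κ, Lstar lam alpha mu θ κ = 0 :=
  Lstar_mu_eq_zero_general lam alpha halpha M hM N hN mu hmu
end

section
/- Consider the one-dimensional reduction of the macroscopic system: ∂_t ρ + c₁ ∂_x(ρ cos θ) = 0, ∂_t θ + c₂ cos θ ∂_x θ − (α²/λ²)(sin θ / ρ) ∂_x ρ = 0. The 2×2 Jacobian matrix of this quasilinear system has real eigenvalues γ = ½[(c₁+c₂) cos θ ± √((c₁−c₂)² cos²θ + 4 c₁ (α²/λ²) sin²θ)]; in particular, the discriminant (c₁−c₂)² cos²θ + 4 c₁ (α²/λ²) sin²θ is nonnegative whenever c₁ ≥ 0, so the system is hyperbolic. -/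
/-!
The numbers `(tr A ± r) / 2` are the eigenvalues of a `2 × 2` matrix `A` as soon as
`r ^ 2 = tr² A - 4 det A`. For the Jacobian the factor `ρ` cancels in the off-diagonal product, so
`tr² A - 4 det A` is the stated discriminant, a sum of nonnegative terms when `c₁ ≥ 0`.
-/

open Real Matrix

theorem Matrix.det_sub_smul_one_fin_two_eq_zero_of_sq_eq {K : Type*} [Field K] [NeZero (2 : K)]
    (M : Matrix (Fin 2) (Fin 2) K) {r : K} (hr : r ^ 2 = M.trace ^ 2 - 4 * M.det) :
    (M - (1 / 2 * (M.trace + r)) • (1 : Matrix (Fin 2) (Fin 2) K)).det = 0 := by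
  rw [trace_fin_two, det_fin_two] at hr
  simp only [det_fin_two, sub_apply, smul_apply, one_apply_eq, one_apply_ne zero_ne_one,
    one_apply_ne one_ne_zero, smul_eq_mul, mul_one, mul_zero, sub_zero, trace_fin_two]
  field_simp
  linear_combination hr

theorem trace_sq_sub_four_det_jacobian (c1 c2 k rho θ : ℝ) (hrho : rho ≠ 0) :
    (!![c1 * cos θ, -c1 * rho * sin θ; -k * sin θ / rho, c2 * cos θ]).trace ^ 2 -
        4 * (!![c1 * cos θ, -c1 * rho * sin θ; -k * sin θ / rho, c2 * cos θ]).det =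
      (c1 - c2) ^ 2 * cos θ ^ 2 + 4 * c1 * k * sin θ ^ 2 := by
  rw [trace_fin_two_of, det_fin_two_of]
  field_simp
  ring

theorem hyperbolicity_general (c1 c2 alpha lam rho θ : ℝ)
    (hc1 : 0 ≤ c1) (hrho : 0 < rho)
    (A : Matrix (Fin 2) (Fin 2) ℝ)
    (hA : A = !![c1 * Real.cos θ, -c1 * rho * Real.sin θ;
                 -(alpha ^ 2 / lam ^ 2) * Real.sin θ / rho, c2 * Real.cos θ]) :
    0 ≤ (c1 - c2) ^ 2 * Real.cos θ ^ 2 +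
        4 * c1 * (alpha ^ 2 / lam ^ 2) * Real.sin θ ^ 2 ∧
    ∀ s : ℝ, s = 1 ∨ s = -1 →
      Matrix.det (A - ((1 / 2) * ((c1 + c2) * Real.cos θ +
          s * Real.sqrt ((c1 - c2) ^ 2 * Real.cos θ ^ 2 +
            4 * c1 * (alpha ^ 2 / lam ^ 2) * Real.sin θ ^ 2))) •
          (1 : Matrix (Fin 2) (Fin 2) ℝ)) = 0 := by
  have hdisc : 0 ≤ (c1 - c2) ^ 2 * cos θ ^ 2 + 4 * c1 * (alpha ^ 2 / lam ^ 2) * sin θ ^ 2 := by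
    positivity
  refine ⟨hdisc, fun s hs => ?_⟩
  have hs : s ^ 2 = 1 := by rcases hs with rfl | rfl <;> norm_num
  have htrace : A.trace = (c1 + c2) * cos θ := by rw [hA, trace_fin_two_of]; ring
  rw [← htrace]
  apply det_sub_smul_one_fin_two_eq_zero_of_sq_eq
  rw [hA, trace_sq_sub_four_det_jacobian _ _ _ _ _ hrho.ne', mul_pow, hs, one_mul, sq_sqrt hdisc]

theorem hyperbolicity (c1 c2 alpha lam rho θ : ℝ)
    (hc1 : 0 ≤ c1) (halpha : 0 < alpha) (hlam : 0 < lam) (hrho : 0 < rho)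
    (A : Matrix (Fin 2) (Fin 2) ℝ)
    (hA : A = !![c1 * Real.cos θ, -c1 * rho * Real.sin θ;
                 -(alpha ^ 2 / lam ^ 2) * Real.sin θ / rho, c2 * Real.cos θ]) :
    0 ≤ (c1 - c2) ^ 2 * Real.cos θ ^ 2 +
        4 * c1 * (alpha ^ 2 / lam ^ 2) * Real.sin θ ^ 2 ∧
    ∀ s : ℝ, s = 1 ∨ s = -1 →
      Matrix.det (A - ((1 / 2) * ((c1 + c2) * Real.cos θ +
          s * Real.sqrt ((c1 - c2) ^ 2 * Real.cos θ ^ 2 +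
            4 * c1 * (alpha ^ 2 / lam ^ 2) * Real.sin θ ^ 2))) •
          (1 : Matrix (Fin 2) (Fin 2) ℝ)) = 0 :=
  hyperbolicity_general c1 c2 alpha lam rho θ hc1 hrho A hA
end
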